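/- For every s ≥ 3, every n ≥ 1, every m ≥ 2, every m̂ with 1 ≤ m̂ < m, and every partition m = m_1 + ⋯ + m_{m̂} into positive parts, there exist nonnegative integers n̂, ň_1, …, ň_{m̂} with n = n̂ + ň_1 + ⋯ + ň_{m̂} such that λ_s(n,m) ≤ Σ_{q=1}^{m̂} λ_s(ň_q, m_q) + 2·λ_{s−1}(n̂, m) + λ_{s−2}(λ_s(n̂, m̂) − 2·n̂, m). -/

import Mathlib

/-- Alternating list `a b a b ⋯` of the given length. -/
def altList : ℕ → ℕ → ℕ → List ℕ
  | 0, _, _ => []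
  | (k+1), a, b => a :: altList k b a

/-- An order-`s` Davenport–Schinzel sequence: it contains no (not necessarily
contiguous) subsequence `a b a b ⋯` of length `s+2` over two distinct symbols. -/
def IsDS (s : ℕ) (S : List ℕ) : Prop :=
  ∀ a b : ℕ, a ≠ b → ¬ (altList (s + 2) a b).Sublist S

/-- 2-sparse: no two equal adjacent symbols. -/
def Sparse2 (S : List ℕ) : Prop := S.Chain' (· ≠ ·)

/-- `S` can be partitioned into at most `m` blocks
(contiguous runs of pairwise distinct symbols). -/
def Blocked (m : ℕ) (S : List ℕ) : Prop :=
  ∃ Bs : List (List ℕ), Bs.length ≤ m ∧ (∀ B ∈ Bs, B.Nodup) ∧ S = Bs.flatten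

/-- `λ_s(n)`: maximum length of a 2-sparse order-`s` DS sequence over an
alphabet of `n` symbols. -/
noncomputable def lamS (s n : ℕ) : ℕ :=
  sSup {l : ℕ | ∃ S : List ℕ, IsDS s S ∧ Sparse2 S ∧ S.toFinset.card ≤ n ∧ S.length = l}

/-- `λ_s(n,m)`: maximum length of an order-`s` DS sequence over an alphabet of
`n` symbols that can be partitioned into at most `m` blocks. -/
noncomputable def lamB (s n m : ℕ) : ℕ :=
  sSup {l : ℕ | ∃ S : List ℕ, IsDS s S ∧ S.toFinset.card ≤ n ∧ Blocked m S ∧ S.length = l}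

/-
Fix an extremal sequence and cut its `m` blocks into `m̂` consecutive chunks of `m_q` blocks. A
symbol is local if it occurs in only one chunk and global otherwise; let `n̂` be the number of
global symbols. The local occurrences in chunk `q` form an order-`s` sequence on `m_q` blocks.
The occurrences of global symbols in their first (resp. last) chunk form an order-`(s-1)`
sequence: an alternation among them lies within one chunk, and a later (resp. earlier) occurrence
of one of its symbols extends it. The remaining middle occurrences, renamed `(a, q)` per chunk,
have order `s-2`, as an alternation extends on both sides. Their alphabet has at most
`Σ_a (#chunks(a) - 2)` symbols, and `Σ_a #chunks(a)` is the length of the order-`s` sequence on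
`m̂` blocks obtained by contracting every chunk to the set of global symbols it contains.
-/

open List

lemma length_altList (k a b : ℕ) : (altList k a b).length = k := by
  induction k generalizing a b with
  | zero => rfl
  | succ k ih => simp [altList, ih]

lemma eq_or_eq_of_mem_altList {k a b e : ℕ} (h : e ∈ altList k a b) : e = a ∨ e = b := by
  induction k generalizing a b with
  | zero => simp [altList] at h
  | succ k ih =>
    rcases mem_cons.1 h with h | h
    · exact Or.inl h
    · exact (ih h).symm

lemma altList_succ_eq_append (k a b : ℕ) :
    altList (k + 1) a b = altList k a b ++ [if Even k then a else b] := by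
  induction k generalizing a b with
  | zero => rfl
  | succ k ih =>
    change a :: altList (k + 1) b a = a :: (altList k b a ++ _)
    rw [ih]
    by_cases hk : Even k <;> simp [hk, Nat.even_add_one]

lemma map_altList (f : ℕ → ℕ) (k a b : ℕ) : (altList k a b).map f = altList k (f a) (f b) := by
  induction k generalizing a b with
  | zero => rfl
  | succ k ih => simp [altList, ih]

lemma triple_sublist_altList {k : ℕ} (hk : 3 ≤ k) (a b : ℕ) : [a, b, a] <+ altList k a b := by
  obtain ⟨k, rfl⟩ : ∃ k', k = k' + 3 := ⟨k - 3, by omega⟩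
  exact (sublist_append_left [a, b, a] (altList k b a))

lemma left_mem_altList {k : ℕ} (hk : 3 ≤ k) (a b : ℕ) : a ∈ altList k a b :=
  (triple_sublist_altList hk a b).subset (by simp)

lemma right_mem_altList {k : ℕ} (hk : 3 ≤ k) (a b : ℕ) : b ∈ altList k a b :=
  (triple_sublist_altList hk a b).subset (by simp)

lemma IsDS.sublist {s : ℕ} {S T : List ℕ} (h : IsDS s S) (hT : T <+ S) : IsDS s T :=
  fun a b hab hsub => h a b hab (hsub.trans hT)

lemma isDS_nil (s : ℕ) : IsDS s [] := fun a b _ h => by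
  simpa [length_altList] using h.length_le

namespace Blocked

lemma nil (m : ℕ) : Blocked m [] := ⟨[], by simp, by simp, rfl⟩

lemma of_nodup {l : List ℕ} (h : l.Nodup) : Blocked 1 l := ⟨[l], by simp, by simpa, by simp⟩

lemma append {m₁ m₂ : ℕ} {S₁ S₂ : List ℕ} (h₁ : Blocked m₁ S₁) (h₂ : Blocked m₂ S₂) :
    Blocked (m₁ + m₂) (S₁ ++ S₂) := by
  obtain ⟨Bs₁, hl₁, hn₁, rfl⟩ := h₁
  obtain ⟨Bs₂, hl₂, hn₂, rfl⟩ := h₂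
  refine ⟨Bs₁ ++ Bs₂, by simp; omega, fun B hB => ?_, by simp⟩
  rcases mem_append.1 hB with hB | hB
  exacts [hn₁ B hB, hn₂ B hB]

lemma exists_append_eq {m₁ m₂ : ℕ} {S : List ℕ} (h : Blocked (m₁ + m₂) S) :
    ∃ S₁ S₂, S = S₁ ++ S₂ ∧ Blocked m₁ S₁ ∧ Blocked m₂ S₂ := by
  obtain ⟨Bs, hl, hn, rfl⟩ := h
  refine ⟨(Bs.take m₁).flatten, (Bs.drop m₁).flatten, by rw [← flatten_append, take_append_drop],
    ⟨_, by simp, fun B hB => hn B (mem_of_mem_take hB), rfl⟩,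
    ⟨_, by simp; omega, fun B hB => hn B (mem_of_mem_drop hB), rfl⟩⟩

lemma filter {m : ℕ} {S : List ℕ} (h : Blocked m S) (p : ℕ → Bool) : Blocked m (S.filter p) := by
  obtain ⟨Bs, hl, hn, rfl⟩ := h
  exact ⟨Bs.map (List.filter p), by simpa, by simpa using fun B hB => (hn B hB).filter p,
    by simp [filter_flatten]⟩

lemma map {m : ℕ} {S : List ℕ} (h : Blocked m S) {f : ℕ → ℕ} (hf : Function.Injective f) :
    Blocked m (S.map f) := by
  obtain ⟨Bs, hl, hn, rfl⟩ := h
  exact ⟨Bs.map (List.map f), by simpa, by simpa using fun B hB => (hn B hB).map hf,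
    by simp [map_flatten]⟩

lemma flatten_ofFn {k : ℕ} {ms : Fin k → ℕ} {T : Fin k → List ℕ} (h : ∀ q, Blocked (ms q) (T q)) :
    Blocked (∑ q, ms q) (ofFn T).flatten := by
  induction k with
  | zero => simpa using nil 0
  | succ k ih =>
    rw [ofFn_succ, flatten_cons, Fin.sum_univ_succ]
    exact (h 0).append (ih fun q => h q.succ)

lemma exists_ofFn_flatten_eq {k : ℕ} {ms : Fin k → ℕ} {S : List ℕ}
    (h : Blocked (∑ q, ms q) S) :
    ∃ T : Fin k → List ℕ, S = (ofFn T).flatten ∧ ∀ q, Blocked (ms q) (T q) := by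
  induction k generalizing S with
  | zero =>
    obtain ⟨Bs, hl, -, rfl⟩ := h
    exact ⟨Fin.elim0, by simp_all, fun q => q.elim0⟩
  | succ k ih =>
    rw [Fin.sum_univ_succ] at h
    obtain ⟨S₁, S₂, rfl, h₁, h₂⟩ := h.exists_append_eq
    obtain ⟨T, rfl, hT⟩ := ih h₂
    refine ⟨Fin.cons S₁ T, by simp [ofFn_succ], fun q => ?_⟩
    cases q using Fin.cases <;> simp [h₁, hT]

lemma length_le {m : ℕ} {S : List ℕ} (h : Blocked m S) : S.length ≤ m * S.toFinset.card := by
  obtain ⟨Bs, hl, hn, rfl⟩ := h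
  rw [length_flatten]
  have hB : ∀ x ∈ Bs.map length, x ≤ Bs.flatten.toFinset.card := by
    intro x hx
    obtain ⟨B, hB, rfl⟩ := mem_map.1 hx
    rw [← (hn B hB).dedup, ← card_toFinset]
    exact Finset.card_le_card fun a ha => by simpa using ⟨B, hB, by simpa using ha⟩
  calc (Bs.map length).sum ≤ Bs.length * Bs.flatten.toFinset.card := by
        simpa using sum_le_card_nsmul _ _ hB
    _ ≤ m * _ := Nat.mul_le_mul_right _ hl

end Blocked

lemma bddAbove_lamB_set (s n m : ℕ) :
    BddAbove {l : ℕ | ∃ S : List ℕ, IsDS s S ∧ S.toFinset.card ≤ n ∧ Blocked m S ∧ S.length = l} :=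
  ⟨m * n, by
    rintro _ ⟨S, -, hn, hS, rfl⟩
    exact hS.length_le.trans (Nat.mul_le_mul_left m hn)⟩

lemma le_lamB {s n m : ℕ} {S : List ℕ} (hS : IsDS s S) (hn : S.toFinset.card ≤ n)
    (hm : Blocked m S) : S.length ≤ lamB s n m :=
  le_csSup (bddAbove_lamB_set s n m) ⟨S, hS, hn, hm, rfl⟩

lemma exists_length_eq_lamB (s n m : ℕ) :
    ∃ S : List ℕ, IsDS s S ∧ S.toFinset.card ≤ n ∧ Blocked m S ∧ S.length = lamB s n m := by
  refine Nat.sSup_mem ?_ (bddAbove_lamB_set s n m)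
  exact ⟨0, [], isDS_nil s, by simp, Blocked.nil m, rfl⟩

section FlattenOfFn

variable {α : Type*} {k : ℕ}

lemma length_flatten_ofFn (F : Fin k → List α) : (ofFn F).flatten.length = ∑ q, (F q).length := by
  simp [length_flatten, map_ofFn, sum_ofFn]

lemma mem_flatten_ofFn {F : Fin k → List α} {a : α} : a ∈ (ofFn F).flatten ↔ ∃ q, a ∈ F q := by
  simp [mem_flatten, mem_ofFn]

lemma flatten_ofFn_sublist_flatten_ofFn {F G : Fin k → List α} (h : ∀ q, F q <+ G q) :
    (ofFn F).flatten <+ (ofFn G).flatten := by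
  induction k with
  | zero => simp
  | succ k ih =>
    simp only [ofFn_succ, flatten_cons]
    exact (h 0).append (ih fun q => h q.succ)

lemma map_sublist_flatten_ofFn (F : Fin k → List α) {is : List (Fin k)}
    (h : is.Pairwise (· < ·)) : (is.map F).flatten <+ (ofFn F).flatten := by
  rw [ofFn_eq_map]
  refine (Sublist.map F ?_).flatten
  exact sublist_of_subperm_of_pairwise (h.nodup.subperm fun i _ => mem_finRange i)
    (h.imp le_of_lt) ((pairwise_lt_finRange k).imp le_of_lt)

lemma append_sublist_flatten_ofFn (F : Fin k → List α) {i j : Fin k} (h : i < j) :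
    F i ++ F j <+ (ofFn F).flatten := by
  simpa using map_sublist_flatten_ofFn F (is := [i, j]) (by simpa using h)

lemma append_append_sublist_flatten_ofFn (F : Fin k → List α) {p i r : Fin k} (hp : p < i)
    (hr : i < r) : F p ++ F i ++ F r <+ (ofFn F).flatten := by
  simpa using map_sublist_flatten_ofFn F (is := [p, i, r]) (by simpa using ⟨⟨hp, hp.trans hr⟩, hr⟩)

lemma flatten_ofFn_eq_of_eq_nil {F : Fin k → List α} {i : Fin k} (h : ∀ q, q ≠ i → F q = []) :
    (ofFn F).flatten = F i := by
  induction k with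
  | zero => exact i.elim0
  | succ k ih =>
    rw [ofFn_succ, flatten_cons]
    cases i using Fin.cases with
    | zero => simp [fun q => h q.succ (Fin.succ_ne_zero q)]
    | succ i =>
      rw [h 0 (Fin.succ_ne_zero i).symm, nil_append]
      exact ih fun q hq => h q.succ (by simpa using hq)

lemma card_toFinset_flatten_ofFn_le [DecidableEq α] (F : Fin k → List α) :
    (ofFn F).flatten.toFinset.card ≤ ∑ q, (F q).toFinset.card := by
  have : (ofFn F).flatten.toFinset = Finset.univ.biUnion fun q => (F q).toFinset := by
    ext a; simp
  rw [this]
  exact Finset.card_biUnion_le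

lemma sublist_of_sublist_flatten_ofFn [DecidableEq α] {F : Fin k → List α}
    (hF : ∀ q q' e, e ∈ F q → e ∈ F q' → q = q') {l : List α} {i : Fin k}
    (hl : l <+ (ofFn F).flatten) (hi : ∀ e ∈ l, e ∈ F i) : l <+ F i := by
  have hfilter : (ofFn F).flatten.filter (· ∈ F i) = F i := by
    rw [filter_flatten, map_ofFn, flatten_ofFn_eq_of_eq_nil (i := i)]
    · simp
    · intro q hq
      simpa [filter_eq_nil_iff] using fun e he hei => hq (hF q i e he hei)
  calc l = l.filter (· ∈ F i) := (filter_eq_self.2 (by simpa using hi)).symm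
    _ <+ (ofFn F).flatten.filter (· ∈ F i) := hl.filter _
    _ = F i := hfilter

lemma exists_altList_sublist_of_sublist_flatten_ofFn {F : Fin k → List ℕ}
    (hF : ∀ q q' e, e ∈ F q → e ∈ F q' → q = q') {j x y : ℕ} (hj : 3 ≤ j)
    (h : altList j x y <+ (ofFn F).flatten) : ∃ i, altList j x y <+ F i := by
  have hchunk : ∀ e ∈ altList j x y, ∃ q, e ∈ F q := fun e he => mem_flatten_ofFn.1 (h.subset he)
  have hsorted : (ofFn F).flatten.Pairwise fun u v => ∀ q q', u ∈ F q → v ∈ F q' → q ≤ q' := by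
    refine pairwise_flatten.2
      ⟨fun l hl => ?_, pairwise_ofFn.2 fun i i' hii' u hu v hv q q' hq hq' => ?_⟩
    · obtain ⟨i, rfl⟩ := mem_ofFn.1 hl
      exact pairwise_of_forall_mem_list fun u hu v hv q q' hq hq' =>
        ((hF _ _ _ hq hu).trans (hF _ _ _ hv hq')).le
    · rw [hF _ _ _ hq hu, hF _ _ _ hq' hv]
      exact hii'.le
  obtain ⟨i, hx⟩ := hchunk x (left_mem_altList hj x y)
  obtain ⟨i', hy⟩ := hchunk y (right_mem_altList hj x y)
  -- `x` occurs both before and after `y`, so the two symbols share a chunk.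
  have hxyx := hsorted.sublist ((triple_sublist_altList hj x y).trans h)
  simp only [pairwise_cons, mem_cons, forall_eq_or_imp] at hxyx
  have hi' : i' = i := le_antisymm (hxyx.2.1.1 _ _ hy hx) (hxyx.1.1 _ _ hx hy)
  rw [hi'] at hy
  refine ⟨i, sublist_of_sublist_flatten_ofFn hF h fun e he => ?_⟩
  rcases eq_or_eq_of_mem_altList he with rfl | rfl
  exacts [hx, hy]

end FlattenOfFn

lemma length_eq_length_filter_add_add_add {α : Type*} (l : List α) (P Q : α → Prop)
    [DecidablePred P] [DecidablePred Q] :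
    l.length = (l.filter fun a => ¬P a ∧ ¬Q a).length + (l.filter fun a => ¬P a ∧ Q a).length
      + (l.filter fun a => P a ∧ ¬Q a).length + (l.filter fun a => P a ∧ Q a).length := by
  induction l with
  | nil => simp
  | cons a l ih => by_cases hP : P a <;> by_cases hQ : Q a <;> simp [hP, hQ] at ih ⊢ <;> omega

noncomputable section Chunks

open Classical

variable {k : ℕ} (T : Fin k → List ℕ)

def OccursBefore (a : ℕ) (q : Fin k) : Prop := ∃ p < q, a ∈ T p

def OccursAfter (a : ℕ) (q : Fin k) : Prop := ∃ r, q < r ∧ a ∈ T r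

def chunksOf (a : ℕ) : Finset (Fin k) := Finset.univ.filter fun q => a ∈ T q

def localPart (q : Fin k) : List ℕ :=
  (T q).filter fun a => ¬OccursBefore T a q ∧ ¬OccursAfter T a q

def firstPart : List ℕ :=
  (ofFn fun q => (T q).filter fun a => ¬OccursBefore T a q ∧ OccursAfter T a q).flatten

def lastPart : List ℕ :=
  (ofFn fun q => (T q).filter fun a => OccursBefore T a q ∧ ¬OccursAfter T a q).flatten

def middlePart : List ℕ :=
  (ofFn fun q =>
    ((T q).filter fun a => OccursBefore T a q ∧ OccursAfter T a q).map (Nat.pair · q)).flatten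

def globalAlphabet : Finset ℕ := (ofFn T).flatten.toFinset.filter fun a => 1 < (chunksOf T a).card

def globalContraction : List ℕ :=
  (ofFn fun q => ((T q).filter (· ∈ globalAlphabet T)).dedup).flatten

variable {T}

lemma mem_chunksOf {a : ℕ} {q : Fin k} : q ∈ chunksOf T a ↔ a ∈ T q := by simp [chunksOf]

lemma eq_of_not_occursBefore {a : ℕ} {q q' : Fin k} (ha : a ∈ T q) (ha' : a ∈ T q')
    (h : ¬OccursBefore T a q) (h' : ¬OccursBefore T a q') : q = q' :=
  le_antisymm (not_lt.1 fun hq => h ⟨q', hq, ha'⟩) (not_lt.1 fun hq => h' ⟨q, hq, ha⟩)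

lemma eq_of_not_occursAfter {a : ℕ} {q q' : Fin k} (ha : a ∈ T q) (ha' : a ∈ T q')
    (h : ¬OccursAfter T a q) (h' : ¬OccursAfter T a q') : q = q' :=
  le_antisymm (not_lt.1 fun hq => h' ⟨q, hq, ha⟩) (not_lt.1 fun hq => h ⟨q', hq, ha'⟩)

lemma mem_globalAlphabet_of_mem_of_ne {a : ℕ} {q r : Fin k} (hq : a ∈ T q) (hr : a ∈ T r)
    (hqr : q ≠ r) : a ∈ globalAlphabet T := by
  refine Finset.mem_filter.2 ⟨by simpa using mem_flatten_ofFn.2 ⟨q, hq⟩, ?_⟩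
  exact Finset.one_lt_card.2 ⟨q, mem_chunksOf.2 hq, r, mem_chunksOf.2 hr, hqr⟩

lemma notMem_globalAlphabet {a : ℕ} {q : Fin k} (hb : ¬OccursBefore T a q)
    (hf : ¬OccursAfter T a q) : a ∉ globalAlphabet T := by
  have : chunksOf T a ⊆ {q} := fun r hr => by
    rcases lt_trichotomy r q with h | h | h
    exacts [(hb ⟨r, h, mem_chunksOf.1 hr⟩).elim, Finset.mem_singleton.2 h,
      (hf ⟨r, h, mem_chunksOf.1 hr⟩).elim]
  have hcard : (chunksOf T a).card ≤ 1 := (Finset.card_le_card this).trans (by simp)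
  simp [globalAlphabet, hcard]

lemma isDS_firstPart {s : ℕ} (hs : 1 ≤ s) (h : IsDS (s + 1) (ofFn T).flatten) :
    IsDS s (firstPart T) := by
  intro a b hab hsub
  obtain ⟨i, hi⟩ := exists_altList_sublist_of_sublist_flatten_ofFn
    (fun q q' e he he' => by
      simp only [mem_filter, decide_eq_true_eq] at he he'
      exact eq_of_not_occursBefore he.1 he'.1 he.2.1 he'.2.1) (by omega) hsub
  have hz : (if Even (s + 2) then a else b) ∈ (T i).filter
      fun a => ¬OccursBefore T a i ∧ OccursAfter T a i := by
    split
    exacts [hi.subset (left_mem_altList (by omega) a b),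
      hi.subset (right_mem_altList (by omega) a b)]
  simp only [mem_filter, decide_eq_true_eq] at hz
  obtain ⟨r, hir, hzr⟩ := hz.2.2
  refine h a b hab ?_
  rw [altList_succ_eq_append]
  exact ((hi.trans filter_sublist).append (singleton_sublist.2 hzr)).trans
    (append_sublist_flatten_ofFn T hir)

lemma isDS_lastPart {s : ℕ} (hs : 1 ≤ s) (h : IsDS (s + 1) (ofFn T).flatten) :
    IsDS s (lastPart T) := by
  intro a b hab hsub
  obtain ⟨i, hi⟩ := exists_altList_sublist_of_sublist_flatten_ofFn
    (fun q q' e he he' => by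
      simp only [mem_filter, decide_eq_true_eq] at he he'
      exact eq_of_not_occursAfter he.1 he'.1 he.2.2 he'.2.2) (by omega) hsub
  have hb := hi.subset (right_mem_altList (by omega) a b)
  simp only [mem_filter, decide_eq_true_eq] at hb
  obtain ⟨p, hpi, hbp⟩ := hb.2.1
  refine h b a hab.symm ?_
  exact ((singleton_sublist.2 hbp).append (hi.trans filter_sublist)).trans
    (append_sublist_flatten_ofFn T hpi)

lemma isDS_middlePart {s : ℕ} (hs : 1 ≤ s) (h : IsDS (s + 2) (ofFn T).flatten) :
    IsDS s (middlePart T) := by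
  intro x y hxy hsub
  obtain ⟨i, hi⟩ := exists_altList_sublist_of_sublist_flatten_ofFn
    (fun q q' e he he' => by
      obtain ⟨a, -, rfl⟩ := mem_map.1 he
      obtain ⟨a', -, he'⟩ := mem_map.1 he'
      exact Fin.ext (Nat.pair_eq_pair.1 he').2.symm) (by omega) hsub
  obtain ⟨a, ha, rfl⟩ := mem_map.1 (hi.subset (left_mem_altList (by omega) _ _))
  obtain ⟨b, hb, rfl⟩ := mem_map.1 (hi.subset (right_mem_altList (by omega) _ _))
  have hab : a ≠ b := fun hab => hxy (by rw [hab])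
  have hiab : altList (s + 2) a b <+ T i := by
    have := hi.map fun e => e.unpair.1
    simp only [map_altList, map_map, Function.comp_def, Nat.unpair_pair, map_id'] at this
    exact this.trans filter_sublist
  simp only [mem_filter, decide_eq_true_eq] at ha hb
  obtain ⟨p, hpi, hbp⟩ := hb.2.1
  obtain ⟨r, hir, hzr⟩ : OccursAfter T (if Even (s + 2) then a else b) i := by
    split
    exacts [ha.2.2, hb.2.2]
  refine h b a hab.symm ?_
  change b :: altList (s + 3) a b <+ _
  rw [altList_succ_eq_append, ← singleton_append, ← append_assoc]
  exact (((singleton_sublist.2 hbp).append hiab).append (singleton_sublist.2 hzr)).trans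
    (append_append_sublist_flatten_ofFn T hpi hir)

lemma length_flatten_ofFn_eq_sum_localPart_add :
    (ofFn T).flatten.length = ∑ q, (localPart T q).length + (firstPart T).length
      + (lastPart T).length + (middlePart T).length := by
  simp only [firstPart, lastPart, middlePart, localPart, length_flatten_ofFn, length_map,
    ← Finset.sum_add_distrib]
  exact Finset.sum_congr rfl fun q _ => length_eq_length_filter_add_add_add _ _ _

lemma blocked_firstPart {ms : Fin k → ℕ} (hT : ∀ q, Blocked (ms q) (T q)) :
    Blocked (∑ q, ms q) (firstPart T) :=
  Blocked.flatten_ofFn fun q => (hT q).filter _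

lemma blocked_lastPart {ms : Fin k → ℕ} (hT : ∀ q, Blocked (ms q) (T q)) :
    Blocked (∑ q, ms q) (lastPart T) :=
  Blocked.flatten_ofFn fun q => (hT q).filter _

lemma blocked_middlePart {ms : Fin k → ℕ} (hT : ∀ q, Blocked (ms q) (T q)) :
    Blocked (∑ q, ms q) (middlePart T) :=
  Blocked.flatten_ofFn fun q => ((hT q).filter _).map fun _ _ h => (Nat.pair_eq_pair.1 h).1

lemma blocked_globalContraction : Blocked k (globalContraction T) := by
  simpa [globalContraction] using
    Blocked.flatten_ofFn (ms := fun _ => 1) fun q => Blocked.of_nodup (nodup_dedup _)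

lemma globalContraction_sublist : globalContraction T <+ (ofFn T).flatten :=
  flatten_ofFn_sublist_flatten_ofFn fun _ => (dedup_sublist _).trans filter_sublist

lemma card_toFinset_globalContraction_le :
    (globalContraction T).toFinset.card ≤ (globalAlphabet T).card := by
  refine Finset.card_le_card fun a ha => ?_
  obtain ⟨q, ha⟩ := mem_flatten_ofFn.1 (mem_toFinset.1 ha)
  simpa using (mem_filter.1 (mem_dedup.1 ha)).2

lemma card_toFinset_firstPart_le : (firstPart T).toFinset.card ≤ (globalAlphabet T).card := by
  refine Finset.card_le_card fun a ha => ?_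
  obtain ⟨q, ha⟩ := mem_flatten_ofFn.1 (mem_toFinset.1 ha)
  simp only [mem_filter, decide_eq_true_eq] at ha
  obtain ⟨haq, -, r, hqr, har⟩ := ha
  exact mem_globalAlphabet_of_mem_of_ne haq har hqr.ne

lemma card_toFinset_lastPart_le : (lastPart T).toFinset.card ≤ (globalAlphabet T).card := by
  refine Finset.card_le_card fun a ha => ?_
  obtain ⟨q, ha⟩ := mem_flatten_ofFn.1 (mem_toFinset.1 ha)
  simp only [mem_filter, decide_eq_true_eq] at ha
  obtain ⟨haq, ⟨p, hpq, hap⟩, -⟩ := ha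
  exact mem_globalAlphabet_of_mem_of_ne haq hap hpq.ne'

lemma card_globalAlphabet_add_sum_card_localPart_le :
    (globalAlphabet T).card + ∑ q, (localPart T q).toFinset.card
      ≤ (ofFn T).flatten.toFinset.card := by
  have hloc : ∀ {a q}, a ∈ (localPart T q).toFinset →
      a ∈ T q ∧ ¬OccursBefore T a q ∧ ¬OccursAfter T a q := by
    simp [localPart]
  have hdisj : Set.PairwiseDisjoint ↑(Finset.univ : Finset (Fin k))
      fun q => (localPart T q).toFinset := fun q _ q' _ hqq' =>
    Finset.disjoint_left.2 fun a ha ha' => by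
      obtain ⟨haq, hb, -⟩ := hloc ha
      obtain ⟨haq', hb', -⟩ := hloc ha'
      exact hqq' (eq_of_not_occursBefore haq haq' hb hb')
  have hG : Disjoint (globalAlphabet T) (Finset.univ.biUnion fun q => (localPart T q).toFinset) :=
    Finset.disjoint_left.2 fun a haG ha => by
      obtain ⟨q, -, ha⟩ := Finset.mem_biUnion.1 ha
      obtain ⟨-, hb, hf⟩ := hloc ha
      exact notMem_globalAlphabet hb hf haG
  rw [← Finset.card_biUnion hdisj, ← Finset.card_union_of_disjoint hG]
  refine Finset.card_le_card (Finset.union_subset (Finset.filter_subset _ _) fun a ha => ?_)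
  obtain ⟨q, -, ha⟩ := Finset.mem_biUnion.1 ha
  exact mem_toFinset.2 (mem_flatten_ofFn.2 ⟨q, (hloc ha).1⟩)

lemma sum_card_toFinset_filter_eq (X : Finset ℕ) (P : Fin k → ℕ → Prop)
    [∀ q, DecidablePred (P q)] (hX : ∀ q, ∀ a ∈ T q, P q a → a ∈ X) :
    ∑ q, ((T q).filter (P q ·)).toFinset.card
      = ∑ a ∈ X, (Finset.univ.filter fun q => a ∈ T q ∧ P q a).card := by
  have h : ∀ q, ((T q).filter (P q ·)).toFinset = X.filter fun a => a ∈ T q ∧ P q a := fun q => by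
    ext a
    simpa using fun ha hP => hX q a ha hP
  simp only [h, Finset.card_filter]
  exact Finset.sum_comm

lemma card_filter_occursBefore_and_occursAfter_add_two_le {a : ℕ} (ha : 1 < (chunksOf T a).card) :
    (Finset.univ.filter fun q => a ∈ T q ∧ OccursBefore T a q ∧ OccursAfter T a q).card + 2
      ≤ (chunksOf T a).card := by
  set C := chunksOf T a
  have hC : C.Nonempty := Finset.card_pos.1 (by omega)
  have hsub : (Finset.univ.filter fun q => a ∈ T q ∧ OccursBefore T a q ∧ OccursAfter T a q)
      ⊆ C \ {C.min' hC, C.max' hC} := by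
    intro q hq
    simp only [Finset.mem_filter, Finset.mem_univ, true_and] at hq
    obtain ⟨haq, ⟨p, hpq, hap⟩, ⟨r, hqr, har⟩⟩ := hq
    simp only [Finset.mem_sdiff, Finset.mem_insert, Finset.mem_singleton, C, mem_chunksOf]
    refine ⟨haq, ?_⟩
    rintro (rfl | rfl)
    · exact (C.min'_le p (mem_chunksOf.2 hap)).not_gt hpq
    · exact (C.le_max' r (mem_chunksOf.2 har)).not_gt hqr
  have hcard := Finset.card_le_card hsub
  rw [Finset.card_sdiff_of_subset (by simp [Finset.insert_subset_iff, Finset.min'_mem,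
    Finset.max'_mem]), Finset.card_pair (Finset.min'_lt_max'_of_card C ha).ne] at hcard
  omega

lemma card_toFinset_middlePart_add_le :
    (middlePart T).toFinset.card + 2 * (globalAlphabet T).card
      ≤ (globalContraction T).length := by
  have hmid : (middlePart T).toFinset.card ≤ ∑ a ∈ globalAlphabet T,
      (Finset.univ.filter fun q => a ∈ T q ∧ OccursBefore T a q ∧ OccursAfter T a q).card := by
    calc (middlePart T).toFinset.card
        ≤ ∑ q, (((T q).filter fun a => OccursBefore T a q ∧ OccursAfter T a q).map
            (Nat.pair · q)).toFinset.card := card_toFinset_flatten_ofFn_le _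
      _ ≤ ∑ q, ((T q).filter fun a => OccursBefore T a q ∧ OccursAfter T a q).toFinset.card :=
          Finset.sum_le_sum fun q _ => by
            rw [show ∀ l : List ℕ, (l.map (Nat.pair · q)).toFinset
                = l.toFinset.image (Nat.pair · q) from fun l => by ext; simp]
            exact Finset.card_image_le
      _ = _ := sum_card_toFinset_filter_eq (globalAlphabet T)
          (fun q a => OccursBefore T a q ∧ OccursAfter T a q) fun q a ha ⟨_, r, hqr, har⟩ =>
            mem_globalAlphabet_of_mem_of_ne ha har hqr.ne
  have hcon : (globalContraction T).length = ∑ a ∈ globalAlphabet T, (chunksOf T a).card := by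
    simp only [globalContraction, length_flatten_ofFn, ← card_toFinset]
    rw [sum_card_toFinset_filter_eq _ (fun _ a => a ∈ globalAlphabet T) fun _ _ _ h => h]
    refine Finset.sum_congr rfl fun a ha => congrArg Finset.card ?_
    ext q
    simp [chunksOf, ha]
  have := Finset.sum_le_sum (s := globalAlphabet T) fun a ha =>
    card_filter_occursBefore_and_occursAfter_add_two_le (T := T) (a := a) (Finset.mem_filter.1 ha).2
  rw [Finset.sum_add_distrib, Finset.sum_const, smul_eq_mul] at this
  omega

end Chunks

theorem stmt8_general (s n m mh : ℕ) (hs : 3 ≤ s) (hmh1 : 1 ≤ mh)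
    (mq : Fin mh → ℕ) (hsum : m = ∑ q, mq q) :
    ∃ (nh : ℕ) (nq : Fin mh → ℕ), n = nh + ∑ q, nq q ∧
      lamB s n m ≤ (∑ q, lamB s (nq q) (mq q)) + 2 * lamB (s - 1) nh m
        + lamB (s - 2) (lamB s nh mh - 2 * nh) m := by
  obtain ⟨s, rfl⟩ : ∃ s', s = s' + 3 := ⟨s - 3, by omega⟩
  obtain ⟨S, hDS, hcard, hBl, hlen⟩ := exists_length_eq_lamB (s + 3) n m
  obtain ⟨T, rfl, hT⟩ := Blocked.exists_ofFn_flatten_eq (hsum ▸ hBl)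
  obtain ⟨d, hd⟩ := Nat.exists_eq_add_of_le
    ((card_globalAlphabet_add_sum_card_localPart_le (T := T)).trans hcard)
  -- alphabet symbols that do not occur in `S` are charged to chunk `0`
  let nq q := (localPart T q).toFinset.card + (Pi.single ⟨0, hmh1⟩ d : Fin mh → ℕ) q
  refine ⟨(globalAlphabet T).card, nq, by simp [nq, Finset.sum_add_distrib, hd, add_assoc], ?_⟩
  have hloc q : (localPart T q).length ≤ lamB (s + 3) (nq q) (mq q) :=
    le_lamB (hDS.sublist (filter_sublist.trans (sublist_flatten_of_mem (mem_ofFn.2 ⟨q, rfl⟩))))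
      (Nat.le_add_right _ _) ((hT q).filter _)
  have hfirst : (firstPart T).length ≤ lamB (s + 2) (globalAlphabet T).card m :=
    le_lamB (isDS_firstPart (by omega) hDS) card_toFinset_firstPart_le (hsum ▸ blocked_firstPart hT)
  have hlast : (lastPart T).length ≤ lamB (s + 2) (globalAlphabet T).card m :=
    le_lamB (isDS_lastPart (by omega) hDS) card_toFinset_lastPart_le (hsum ▸ blocked_lastPart hT)
  have hcon : (globalContraction T).length ≤ lamB (s + 3) (globalAlphabet T).card mh :=
    le_lamB (hDS.sublist globalContraction_sublist) card_toFinset_globalContraction_le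
      blocked_globalContraction
  have hmid : (middlePart T).length
      ≤ lamB (s + 1) (lamB (s + 3) (globalAlphabet T).card mh - 2 * (globalAlphabet T).card) m :=
    le_lamB (isDS_middlePart (by omega) hDS)
      (by have := card_toFinset_middlePart_add_le (T := T); omega) (hsum ▸ blocked_middlePart hT)
  rw [← hlen, length_flatten_ofFn_eq_sum_localPart_add]
  have := Finset.sum_le_sum fun q (_ : q ∈ Finset.univ) => hloc q
  simp only [show s + 3 - 1 = s + 2 by omega, show s + 3 - 2 = s + 1 by omega]
  omega

/-- Nivasch-style recurrence: for every `s ≥ 3`, `n ≥ 1`, `m ≥ 2`, every `m̂` with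
`1 ≤ m̂ < m`, and every partition `m = m₁ + ⋯ + m_{m̂}` into positive parts, there
is an alphabet partition `n = n̂ + ň₁ + ⋯ + ň_{m̂}` with
`λ_s(n,m) ≤ Σ_q λ_s(ň_q, m_q) + 2·λ_{s−1}(n̂, m) + λ_{s−2}(λ_s(n̂, m̂) − 2n̂, m)`. -/
theorem stmt8 (s n m mh : ℕ) (hs : 3 ≤ s) (hn : 1 ≤ n) (hm : 2 ≤ m)
    (hmh1 : 1 ≤ mh) (hmh2 : mh < m)
    (mq : Fin mh → ℕ) (hmq : ∀ q, 1 ≤ mq q) (hsum : m = ∑ q, mq q) :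
    ∃ (nh : ℕ) (nq : Fin mh → ℕ), n = nh + ∑ q, nq q ∧
      lamB s n m ≤ (∑ q, lamB s (nq q) (mq q)) + 2 * lamB (s - 1) nh m
        + lamB (s - 2) (lamB s nh mh - 2 * nh) m :=
  stmt8_general s n m mh hs hmh1 mq hsum
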